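/- arXiv:1811.06590 — 2 statements merged into one kernel-verified Lean document; each statement's English description precedes it below -/
import Mathlib

section
/- If P is a symmetric positive definite matrix, K_f a matrix, Q and R positive definite, and (A+BK_f)ᵀ P (A+BK_f) + Q + K_fᵀ R K_f = P, then the spectral radius of A+BK_f is strictly less than 1 (i.e., A+BK_f is Schur stable). -/
open Matrix

/-- A real square matrix is Schur stable if all of its complex eigenvalues
(roots of its characteristic polynomial over `ℂ`) have modulus `< 1`. -/
def SchurStable {n : ℕ} (M : Matrix (Fin n) (Fin n) ℝ) : Prop :=
  ∀ μ : ℂ, (M.map (Complex.ofReal)).charpoly.IsRoot μ → ‖μ‖ < 1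

/-!
With `M = A + B K_f` and `S = Q + K_fᵀ R K_f ≻ 0`, the hypothesis is the discrete Lyapunov
equation `Mᵀ P M + S = P`. For a complex eigenvector `M v = μ v`, taking the quadratic form at `v`
of the complexified equation gives `|μ|² v*Pv + v*Sv = v*Pv`; as `v*Sv > 0` and `v*Pv ≥ 0`,
this forces `|μ| < 1`.
-/

open scoped ComplexOrder

namespace Matrix

variable {n : Type*}

theorem IsHermitian.map_ofReal {P : Matrix n n ℝ} (hP : P.IsHermitian) :
    (P.map Complex.ofReal).IsHermitian :=
  hP.map _ fun a => (Complex.conj_ofReal a).symm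

variable [Fintype n]

theorem exists_mulVec_eq_smul_of_isRoot_charpoly {K : Type*} [Field K] [DecidableEq n]
    {A : Matrix n n K} {μ : K} (h : A.charpoly.IsRoot μ) : ∃ v ≠ 0, A *ᵥ v = μ • v := by
  rw [← mem_spectrum_iff_isRoot_charpoly, ← spectrum_toLin',
    ← Module.End.hasEigenvalue_iff_mem_spectrum] at h
  obtain ⟨v, hv⟩ := h.exists_hasEigenvector
  exact ⟨v, hv.2, by simpa using hv.apply_eq_smul⟩

theorem norm_lt_one_of_mulVec_eq_smul_of_conjTranspose_mul_mul_add_eq {𝕜 : Type*} [RCLike 𝕜]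
    {M P S : Matrix n n 𝕜} (hP : P.PosSemidef) (hS : S.PosDef) (h : Mᴴ * P * M + S = P)
    {μ : 𝕜} {v : n → 𝕜} (hv : v ≠ 0) (hμ : M *ᵥ v = μ • v) : ‖μ‖ < 1 := by
  set p := star v ⬝ᵥ P *ᵥ v
  set s := star v ⬝ᵥ S *ᵥ v
  have hp : 0 ≤ RCLike.re p := (RCLike.nonneg_iff.mp (hP.dotProduct_mulVec_nonneg v)).1
  have hs : 0 < RCLike.re s := (RCLike.pos_iff.mp (hS.dotProduct_mulVec_pos hv)).1
  have hMPM : star v ⬝ᵥ (Mᴴ * P * M) *ᵥ v = (‖μ‖ ^ 2 : 𝕜) * p := by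
    rw [Matrix.mul_assoc, ← mulVec_mulVec, ← mulVec_mulVec, dotProduct_mulVec, ← star_mulVec,
      hμ, star_smul, mulVec_smul, smul_dotProduct, dotProduct_smul, smul_smul, smul_eq_mul,
      RCLike.star_def, RCLike.conj_mul]
  have hre : ‖μ‖ ^ 2 * RCLike.re p + RCLike.re s = RCLike.re p := by
    rw [← RCLike.re_ofReal_mul, RCLike.ofReal_pow, ← map_add, ← hMPM, ← dotProduct_add,
      ← add_mulVec, h]
  have hμ2 : ‖μ‖ ^ 2 < 1 := by
    by_contra! h1
    nlinarith [mul_nonneg (sub_nonneg.2 h1) hp]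
  exact (sq_lt_one_iff₀ (norm_nonneg μ)).1 hμ2

theorem re_star_dotProduct_map_ofReal_mulVec (N : Matrix n n ℝ) (v : n → ℂ) :
    (star v ⬝ᵥ N.map Complex.ofReal *ᵥ v).re =
      (Complex.re ∘ v) ⬝ᵥ N *ᵥ (Complex.re ∘ v) +
        (Complex.im ∘ v) ⬝ᵥ N *ᵥ (Complex.im ∘ v) := by
  simp only [dotProduct, mulVec, Pi.star_apply, map_apply, Function.comp_apply, Complex.re_sum,
    Finset.mul_sum, ← Finset.sum_add_distrib]
  refine Finset.sum_congr rfl fun i _ => Finset.sum_congr rfl fun j _ => ?_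
  simp [Complex.mul_re, Complex.mul_im]

theorem PosSemidef.map_ofReal {P : Matrix n n ℝ} (hP : P.PosSemidef) :
    (P.map Complex.ofReal).PosSemidef := by
  have hH := hP.isHermitian.map_ofReal
  refine .of_dotProduct_mulVec_nonneg hH fun v =>
    RCLike.nonneg_iff.2 ⟨?_, hH.im_star_dotProduct_mulVec_self v⟩
  rw [RCLike.re_to_complex, re_star_dotProduct_map_ofReal_mulVec]
  exact add_nonneg (hP.dotProduct_mulVec_nonneg _) (hP.dotProduct_mulVec_nonneg _)

theorem PosDef.map_ofReal {P : Matrix n n ℝ} (hP : P.PosDef) : (P.map Complex.ofReal).PosDef := by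
  have hH := hP.isHermitian.map_ofReal
  refine .of_dotProduct_mulVec_pos hH fun v hv =>
    RCLike.pos_iff.2 ⟨?_, hH.im_star_dotProduct_mulVec_self v⟩
  have hre_im : Complex.re ∘ v ≠ 0 ∨ Complex.im ∘ v ≠ 0 := by
    by_contra! h
    exact hv (funext fun i => Complex.ext (congrFun h.1 i) (congrFun h.2 i))
  rw [RCLike.re_to_complex, re_star_dotProduct_map_ofReal_mulVec]
  rcases hre_im with h | h
  · exact add_pos_of_pos_of_nonneg (hP.dotProduct_mulVec_pos h)
      (hP.posSemidef.dotProduct_mulVec_nonneg _)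
  · exact add_pos_of_nonneg_of_pos (hP.posSemidef.dotProduct_mulVec_nonneg _)
      (hP.dotProduct_mulVec_pos h)

end Matrix

theorem SchurStable.of_transpose_mul_mul_add_eq {n : ℕ} {M P S : Matrix (Fin n) (Fin n) ℝ}
    (hP : P.PosSemidef) (hS : S.PosDef) (h : Mᵀ * P * M + S = P) : SchurStable M := by
  intro μ hμ
  obtain ⟨v, hv, hMv⟩ := exists_mulVec_eq_smul_of_isRoot_charpoly hμ
  refine norm_lt_one_of_mulVec_eq_smul_of_conjTranspose_mul_mul_add_eq hP.map_ofReal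
    hS.map_ofReal ?_ hv hMv
  rw [← conjTranspose_map _ fun _ => (Complex.conj_ofReal _).symm,
    conjTranspose_eq_transpose_of_trivial]
  have hC := congrArg Complex.ofRealHom.mapMatrix h
  simp only [map_add, map_mul, RingHom.mapMatrix_apply] at hC
  exact hC

theorem riccati_implies_schur_stable_general
    (n m : ℕ)
    (A : Matrix (Fin n) (Fin n) ℝ) (B : Matrix (Fin n) (Fin m) ℝ)
    (Q P : Matrix (Fin n) (Fin n) ℝ) (R : Matrix (Fin m) (Fin m) ℝ)
    (Kf : Matrix (Fin m) (Fin n) ℝ)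
    (hQ : Q.PosDef) (hR : R.PosDef) (hP : P.PosDef)
    (hric : (A + B * Kf)ᵀ * P * (A + B * Kf) + Q + Kfᵀ * R * Kf = P) :
    SchurStable (A + B * Kf) := by
  have hKRK : (Kfᵀ * R * Kf).PosSemidef := by
    simpa using hR.posSemidef.conjTranspose_mul_mul_same Kf
  rw [add_assoc] at hric
  exact .of_transpose_mul_mul_add_eq hP.posSemidef (hQ.add_posSemidef hKRK) hric

/-- If `P` is symmetric positive definite, `Q`, `R` are positive definite, and
`(A+BK_f)ᵀ P (A+BK_f) + Q + K_fᵀ R K_f = P`, then `A + B K_f` is Schur stable. -/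
theorem riccati_implies_schur_stable
    (n m : ℕ)
    (A : Matrix (Fin n) (Fin n) ℝ) (B : Matrix (Fin n) (Fin m) ℝ)
    (Q P : Matrix (Fin n) (Fin n) ℝ) (R : Matrix (Fin m) (Fin m) ℝ)
    (Kf : Matrix (Fin m) (Fin n) ℝ)
    (hQ : Q.PosDef) (hR : R.PosDef) (hP : P.PosDef) (hPsymm : P.IsSymm)
    (hric : (A + B * Kf)ᵀ * P * (A + B * Kf) + Q + Kfᵀ * R * Kf = P) :
    SchurStable (A + B * Kf) :=
  riccati_implies_schur_stable_general n m A B Q P R Kf hQ hR hP hric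
end

section
/- Robust constraint satisfaction by induction: suppose for each k the nominal quantities satisfy H x̄_k ∈ 𝒵̄ = 𝒵 ⊖ ℰ and ū_k ∈ 𝒰̄ = 𝒰 ⊖ K𝒟, that 𝒟 ⊆ 𝒟_0 and 𝒵̄ ⊆ 𝒵, and that the error bounds have the property: if for all i in a window of length τ ending at k−1 the conditions H^f x^f_i ∈ 𝒵, u_i ∈ 𝒰, H x̄_i ∈ 𝒵, d_i ∈ 𝒟_0 hold, then d_k ∈ 𝒟 and e_k ∈ ℰ. If these window conditions hold at an initial time k_d, then for all k ≥ k_d: d_k ∈ 𝒟, e_k ∈ ℰ, u_k = ū_k + K d_k ∈ 𝒰, and H^f x^f_k ∈ 𝒵. -/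
open Matrix Set

/-- Pontryagin difference `S ⊖ T = {x : ∀ t ∈ T, x + t ∈ S}`. -/
def pontryaginDiff {α : Type*} [Add α] (S T : Set α) : Set α :=
  {x | ∀ t ∈ T, x + t ∈ S}

/-- Robust constraint satisfaction by induction: if the nominal quantities always
satisfy the tightened constraints `H x̄_k ∈ 𝒵 ⊖ ℰ` and `ū_k ∈ 𝒰 ⊖ K𝒟`, the sets
satisfy `𝒟 ⊆ 𝒟_0` and `𝒵 ⊖ ℰ ⊆ 𝒵`, the error bounds have the window property (if
the conditions `H^f x^f_i ∈ 𝒵`, `u_i ∈ 𝒰`, `H x̄_i ∈ 𝒵`, `d_i ∈ 𝒟_0` hold on the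
window `[k−τ, k−1]` then `d_k ∈ 𝒟` and `e_k ∈ ℰ`), and the window conditions hold
at the initial time `k_d`, then for all `k ≥ k_d`: `d_k ∈ 𝒟`, `e_k ∈ ℰ`,
`u_k = ū_k + K d_k ∈ 𝒰`, and `H^f x^f_k ∈ 𝒵`. -/
theorem robust_constraint_satisfaction_induction
    (nf n m o : ℕ)
    (Hf : Matrix (Fin o) (Fin nf) ℝ) (H : Matrix (Fin o) (Fin n) ℝ)
    (K : Matrix (Fin m) (Fin n) ℝ)
    (Z E : Set (Fin o → ℝ)) (U : Set (Fin m → ℝ))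
    (D D0 : Set (Fin n → ℝ))
    (τ kd : ℕ) (hτkd : τ ≤ kd)
    (xf : ℕ → (Fin nf → ℝ)) (xbar : ℕ → (Fin n → ℝ))
    (ubar u : ℕ → (Fin m → ℝ)) (d : ℕ → (Fin n → ℝ)) (e : ℕ → (Fin o → ℝ))
    (he : ∀ k, e k = Hf *ᵥ xf k - H *ᵥ xbar k)
    (hu : ∀ k, u k = ubar k + K *ᵥ d k)
    (hnomZ : ∀ k, H *ᵥ xbar k ∈ pontryaginDiff Z E)
    (hnomU : ∀ k, ubar k ∈ pontryaginDiff U ((fun p => K *ᵥ p) '' D))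
    (hDD0 : D ⊆ D0)
    (hZbarZ : pontryaginDiff Z E ⊆ Z)
    (herr : ∀ k, τ ≤ k →
      (∀ i, k - τ ≤ i → i ≤ k - 1 →
        Hf *ᵥ xf i ∈ Z ∧ u i ∈ U ∧ H *ᵥ xbar i ∈ Z ∧ d i ∈ D0) →
      d k ∈ D ∧ e k ∈ E)
    (hinit : ∀ i, kd - τ ≤ i → i ≤ kd - 1 →
      Hf *ᵥ xf i ∈ Z ∧ u i ∈ U ∧ H *ᵥ xbar i ∈ Z ∧ d i ∈ D0) :
    ∀ k, kd ≤ k → d k ∈ D ∧ e k ∈ E ∧ u k ∈ U ∧ Hf *ᵥ xf k ∈ Z := by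
  intro k
  induction k using Nat.strong_induction_on with
  | _ k ih =>
  intro hk
  have hwin : ∀ i, k - τ ≤ i → i ≤ k - 1 →
      Hf *ᵥ xf i ∈ Z ∧ u i ∈ U ∧ H *ᵥ xbar i ∈ Z ∧ d i ∈ D0 := by
    intro i hi1 hi2
    by_cases hikd : kd ≤ i ∧ i < k
    · obtain ⟨hd, he', hu', hz⟩ := ih i hikd.2 hikd.1
      exact ⟨hz, hu', hZbarZ (hnomZ i), hDD0 hd⟩
    · exact hinit i (by omega) (by omega)
  obtain ⟨hdk, hek⟩ := herr k (le_trans hτkd hk) hwin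
  refine ⟨hdk, hek, ?_, ?_⟩
  · rw [hu k]
    exact hnomU k _ ⟨d k, hdk, rfl⟩
  · have : Hf *ᵥ xf k = H *ᵥ xbar k + e k := by
      rw [he k]; ring
    rw [this]
    exact hnomZ k _ hek
end
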